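/- Let n₊, μ₊, n₋, μ₋, t be an edge configuration with ⟨n₊,n₋⟩ ≠ −1, let W : ℝ³ → ℝ³ be a linear map, and let a ∈ ℝ³ satisfy the co-normal continuity a = P_{n₋→n₊}(−W(μ₋)). Then P_{n₋→n₊}(W(P_{n₊→n₋}(μ₊))) = a; i.e., the intrinsic jump of W across the edge evaluated in the co-normal direction μ₊ vanishes. -/

import Mathlib

open scoped InnerProductSpace

noncomputable section
open Classical

abbrev E3 : Type := EuclideanSpace ℝ (Fin 3)

/-- Cross product on `E3`. -/
def cross3 (a b : E3) : E3 :=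
  (EuclideanSpace.equiv (Fin 3) ℝ).symm
    (crossProduct ((EuclideanSpace.equiv (Fin 3) ℝ) a) ((EuclideanSpace.equiv (Fin 3) ℝ) b))

/-- Geodesic distance on the unit sphere. -/
def sphDist (n₁ n₂ : E3) : ℝ := Real.arccos ⟪n₁, n₂⟫_ℝ

/-- The logarithmic map of the unit sphere. -/
def sphLog (n₁ n₂ : E3) : E3 :=
  if n₂ = n₁ then 0
  else (Real.arccos ⟪n₁, n₂⟫_ℝ / ‖n₂ - ⟪n₁, n₂⟫_ℝ • n₁‖) • (n₂ - ⟪n₁, n₂⟫_ℝ • n₁)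

/-- Parallel transport along the shortest geodesic of the unit sphere. -/
def ptrans (n₁ n₂ ξ : E3) : E3 :=
  ξ - (⟪ξ, n₂⟫_ℝ / (1 + ⟪n₂, n₁⟫_ℝ)) • (n₂ + n₁)

/-! In the plane `t⊥` the BAC–CAB rule expresses the second frame through the first:
`n₋ = c n₊ + b μ₊` and `μ₋ = b n₊ - c μ₊` with `c = ⟪n₋, n₊⟫`, `b = ⟪n₋, μ₊⟫`, `b² + c² = 1`.
Parallel transport from `n₊` to `n₋` rotates `μ₊` by the same angle, to `c μ₊ - b n₊ = -μ₋`;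
by linearity of `W` the claim is then exactly the co-normal continuity of `a`. -/

open Matrix

lemma inner_eq_dotProduct (x y : E3) : ⟪x, y⟫_ℝ = x.ofLp ⬝ᵥ y.ofLp := by
  rw [EuclideanSpace.inner_eq_star_dotProduct, star_trivial, dotProduct_comm]

lemma ofLp_cross3 (u v : E3) : (cross3 u v).ofLp = u.ofLp ⨯₃ v.ofLp := rfl

lemma cross3_neg_right (u v : E3) : cross3 u (-v) = -cross3 u v :=
  WithLp.ofLp_injective 2 <| by simp only [ofLp_cross3, WithLp.ofLp_neg, map_neg]

lemma cross3_cross3 (u v w : E3) : cross3 u (cross3 v w) = ⟪u, w⟫_ℝ • v - ⟪v, u⟫_ℝ • w :=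
  WithLp.ofLp_injective 2 <| by
    simpa only [ofLp_cross3, WithLp.ofLp_sub, WithLp.ofLp_smul, inner_eq_dotProduct]
      using cross_cross_eq_smul_sub_smul' _ _ _

lemma norm_cross3_sq (u v : E3) : ‖cross3 u v‖ ^ 2 = ‖u‖ ^ 2 * ‖v‖ ^ 2 - ⟪u, v⟫_ℝ ^ 2 := by
  simp only [← real_inner_self_eq_norm_sq, inner_eq_dotProduct, ofLp_cross3, cross_dot_cross,
    dotProduct_comm v.ofLp u.ofLp]
  ring

lemma inner_eq_zero_of_norm_cross3_eq_one {u v : E3} (hu : ‖u‖ = 1) (hv : ‖v‖ = 1)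
    (huv : ‖cross3 u v‖ = 1) : ⟪u, v⟫_ℝ = 0 := by
  have := norm_cross3_sq u v
  rw [hu, hv, huv] at this
  exact pow_eq_zero_iff two_ne_zero |>.mp (by linarith)

lemma cross3_cross3_self_left {u v : E3} (hu : ‖u‖ = 1) (huv : ⟪u, v⟫_ℝ = 0) :
    cross3 u (cross3 u v) = -v := by
  rw [cross3_cross3, huv, real_inner_self_eq_norm_sq, hu]
  module

lemma cross3_cross3_self_right {u v : E3} (hv : ‖v‖ = 1) (huv : ⟪u, v⟫_ℝ = 0) :
    cross3 v (cross3 u v) = u := by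
  rw [cross3_cross3, real_inner_comm, huv, real_inner_self_eq_norm_sq, hv]
  module

lemma ptrans_to_smul_add_smul {n μ : E3} (hn : ‖n‖ = 1) (hμ : ‖μ‖ = 1) (hnμ : ⟪n, μ⟫_ℝ = 0)
    {b c : ℝ} (hbc : c ^ 2 + b ^ 2 = 1) (hc : c ≠ -1) :
    ptrans n (c • n + b • μ) μ = c • μ - b • n := by
  have h1c : 1 + c ≠ 0 := fun h => hc (by linarith)
  have hμ' : ⟪μ, c • n + b • μ⟫_ℝ = b := by
    rw [inner_add_right, inner_smul_right, inner_smul_right, real_inner_comm, hnμ,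
      real_inner_self_eq_norm_sq, hμ]; ring
  have hn' : ⟪c • n + b • μ, n⟫_ℝ = c := by
    rw [inner_add_left, real_inner_smul_left, real_inner_smul_left, real_inner_comm n μ, hnμ,
      real_inner_self_eq_norm_sq, hn]; ring
  rw [ptrans, hμ', hn']
  match_scalars
  · field_simp
    linear_combination -hbc
  · field_simp
    ring

lemma norm_smul_add_smul_sq {n μ : E3} (hn : ‖n‖ = 1) (hμ : ‖μ‖ = 1) (hnμ : ⟪n, μ⟫_ℝ = 0)
    (a b : ℝ) : ‖a • n + b • μ‖ ^ 2 = a ^ 2 + b ^ 2 := by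
  rw [norm_add_sq_real, real_inner_smul_left, real_inner_smul_right, hnμ, norm_smul, norm_smul,
    hn, hμ]
  simp

lemma conormal_eq_of_cross3_eq_neg {np μp nm μm : E3} (hnm : ‖nm‖ = 1) (hm : ⟪nm, μm⟫_ℝ = 0)
    (hcm : cross3 nm μm = -cross3 np μp) : μm = ⟪nm, μp⟫_ℝ • np - ⟪nm, np⟫_ℝ • μp :=
  calc μm = -cross3 nm (cross3 nm μm) := by rw [cross3_cross3_self_left hnm hm, neg_neg]
    _ = cross3 nm (cross3 np μp) := by rw [hcm, cross3_neg_right, neg_neg]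
    _ = ⟪nm, μp⟫_ℝ • np - ⟪nm, np⟫_ℝ • μp := by rw [cross3_cross3, real_inner_comm nm np]

lemma normal_eq_of_cross3_eq_neg {np μp nm μm : E3} (hnp : ‖np‖ = 1) (hμp : ‖μp‖ = 1)
    (hp : ⟪np, μp⟫_ℝ = 0) (hnm : ‖nm‖ = 1) (hμm : ‖μm‖ = 1) (hm : ⟪nm, μm⟫_ℝ = 0)
    (hcm : cross3 nm μm = -cross3 np μp) : nm = ⟪nm, np⟫_ℝ • np + ⟪nm, μp⟫_ℝ • μp := by
  have hμm_eq := conormal_eq_of_cross3_eq_neg hnm hm hcm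
  have hμm_μp : ⟪μm, μp⟫_ℝ = -⟪nm, np⟫_ℝ := by
    rw [hμm_eq, inner_sub_left, real_inner_smul_left, real_inner_smul_left, hp,
      real_inner_self_eq_norm_sq, hμp]; ring
  have hnp_μm : ⟪np, μm⟫_ℝ = ⟪nm, μp⟫_ℝ := by
    rw [hμm_eq, inner_sub_right, real_inner_smul_right, real_inner_smul_right, hp,
      real_inner_self_eq_norm_sq, hnp]; ring
  calc nm = cross3 μm (cross3 nm μm) := (cross3_cross3_self_right hμm hm).symm
    _ = -cross3 μm (cross3 np μp) := by rw [hcm, cross3_neg_right]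
    _ = ⟪nm, np⟫_ℝ • np + ⟪nm, μp⟫_ℝ • μp := by
      rw [cross3_cross3, hμm_μp, hnp_μm]; module

lemma ptrans_conormal_eq_neg_conormal {np μp nm μm t : E3}
    (hnp : ‖np‖ = 1) (hμp : ‖μp‖ = 1) (hnm : ‖nm‖ = 1) (hμm : ‖μm‖ = 1) (ht : ‖t‖ = 1)
    (hcp : cross3 np μp = t) (hcm : cross3 nm μm = -t) (hne : ⟪np, nm⟫_ℝ ≠ -1) :
    ptrans np nm μp = -μm := by
  have hp := inner_eq_zero_of_norm_cross3_eq_one hnp hμp (hcp ▸ ht)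
  have hm := inner_eq_zero_of_norm_cross3_eq_one hnm hμm (by rw [hcm, norm_neg, ht])
  subst hcp
  have hμm_eq := conormal_eq_of_cross3_eq_neg hnm hm hcm
  have hnm_eq := normal_eq_of_cross3_eq_neg hnp hμp hp hnm hμm hm hcm
  rw [real_inner_comm] at hne
  set b := ⟪nm, μp⟫_ℝ
  set c := ⟪nm, np⟫_ℝ
  have hbc : c ^ 2 + b ^ 2 = 1 := by
    rw [← norm_smul_add_smul_sq hnp hμp hp, ← hnm_eq, hnm, one_pow]
  rw [hμm_eq, hnm_eq, ptrans_to_smul_add_smul hnp hμp hp hbc hne, neg_sub]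

theorem intrinsic_jump_vanishes_in_co_normal_direction (np μp nm μm t : E3)
    (hnp : ‖np‖ = 1) (hμp : ‖μp‖ = 1) (hnm : ‖nm‖ = 1) (hμm : ‖μm‖ = 1) (ht : ‖t‖ = 1)
    (hcp : cross3 np μp = t) (hcm : cross3 nm μm = -t)
    (hne : ⟪np, nm⟫_ℝ ≠ -1)
    (W : E3 →ₗ[ℝ] E3) (a : E3)
    (hcont : a = ptrans nm np (-(W μm))) :
    ptrans nm np (W (ptrans np nm μp)) = a := by
  rw [ptrans_conormal_eq_neg_conormal hnp hμp hnm hμm ht hcp hcm hne, map_neg, hcont]
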